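/- arXiv:2107.00217 — 2 statements merged into one kernel-verified Lean document; each statement's English description precedes it below -/
import Mathlib

section
/- Let D ⊂ ℝ² be a bounded smooth domain, G = (−Δ)⁻¹ with zero Dirichlet boundary condition, ω̄ ∈ L^∞(D) with ω̄ = g(Gω̄) a.e. in D, where g : ℝ → ℝ is nondecreasing on [m, M] = [min Gω̄, max Gω̄], strictly increasing on (−∞, m], continuous, and satisfies g(s) → ±∞ as s → ±∞. If λ̄ ∈ ℝ satisfies ∫_D g(Gω̄ − λ̄) dx = ∫_D ω̄ dx, then λ̄ = 0. -/
open MeasureTheory Filter Set Topology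

section IntegralOverOpenSet

variable {X : Type*} [TopologicalSpace X] [MeasurableSpace X] [OpensMeasurableSpace X]
  {μ : Measure X} [μ.IsOpenPosMeasure] {D : Set X} {x₀ : X}

/-- Continuity up to the boundary lets positivity at a point of `closure D` spread to a nonempty
open piece of `D`, which has positive measure. -/
theorem setIntegral_pos_of_continuousOn_closure (hD : IsOpen D) {f : X → ℝ}
    (hf : ContinuousOn f (closure D)) (hf0 : ∀ x ∈ D, 0 ≤ f x) (hfi : IntegrableOn f D μ)
    (hx₀ : x₀ ∈ closure D) (hfx₀ : 0 < f x₀) : 0 < ∫ x in D, f x ∂μ := by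
  have hev : ∀ᶠ x in 𝓝[D] x₀, 0 < f x :=
    ((hf x₀ hx₀).eventually (eventually_gt_nhds hfx₀)).filter_mono
      (nhdsWithin_mono x₀ subset_closure)
  obtain ⟨U, hUo, hx₀U, hU⟩ := mem_nhdsWithin.mp hev
  have hUD : (U ∩ D).Nonempty := mem_closure_iff.mp hx₀ U hUo hx₀U
  rw [setIntegral_pos_iff_support_of_nonneg_ae
    ((ae_restrict_iff' hD.measurableSet).mpr (ae_of_all μ hf0)) hfi]
  calc 0 < μ (U ∩ D) := (hUo.inter hD).measure_pos μ hUD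
    _ ≤ μ (Function.support f ∩ D) :=
      measure_mono fun x hx => ⟨(hU hx).ne', hx.2⟩

theorem setIntegral_lt_setIntegral_of_continuousOn_closure [T2Space X]
    [IsFiniteMeasureOnCompacts μ] (hD : IsOpen D) (hDc : IsCompact (closure D)) {f g : X → ℝ}
    (hf : ContinuousOn f (closure D)) (hg : ContinuousOn g (closure D))
    (hle : ∀ x ∈ D, f x ≤ g x) (hx₀ : x₀ ∈ closure D) (hlt : f x₀ < g x₀) :
    ∫ x in D, f x ∂μ < ∫ x in D, g x ∂μ := by
  have hfi : IntegrableOn f D μ := (hf.integrableOn_compact hDc).mono_set subset_closure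
  have hgi : IntegrableOn g D μ := (hg.integrableOn_compact hDc).mono_set subset_closure
  rw [← sub_pos, ← integral_sub hgi hfi]
  exact setIntegral_pos_of_continuousOn_closure hD (hg.sub hf)
    (fun x hx => sub_nonneg.mpr (hle x hx)) (hgi.sub hfi) hx₀ (sub_pos.mpr hlt)

end IntegralOverOpenSet

theorem stmt13_general (D : Set (EuclideanSpace ℝ (Fin 2)))
    (hDo : IsOpen D) (hDb : Bornology.IsBounded D)
    (G : (EuclideanSpace ℝ (Fin 2) → ℝ) → (EuclideanSpace ℝ (Fin 2) → ℝ))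
    (omb : EuclideanSpace ℝ (Fin 2) → ℝ)
    (hcont : ContinuousOn (G omb) (closure D))
    (m M : ℝ)
    (hm : IsLeast (G omb '' closure D) m)
    (hM : IsGreatest (G omb '' closure D) M)
    (g : ℝ → ℝ) (hgc : Continuous g) (hgm : Monotone g)
    (hgsm : StrictMonoOn g (Set.Iic m)) (hgsM : StrictMonoOn g (Set.Ici M))
    (heq : ∀ᵐ x ∂(volume.restrict D), omb x = g (G omb x))
    (lb : ℝ)
    (hlb : ∫ x, g (G omb x - lb) ∂(volume.restrict D)
        = ∫ x, omb x ∂(volume.restrict D)) :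
    lb = 0 := by
  have hK : IsCompact (closure D) := hDb.isCompact_closure
  have hshift : ∫ x in D, g (G omb x - lb) = ∫ x in D, g (G omb x) :=
    hlb.trans (integral_congr_ae heq)
  have hc : ContinuousOn (fun x => g (G omb x)) (closure D) := hgc.comp_continuousOn hcont
  have hc_lb : ContinuousOn (fun x => g (G omb x - lb)) (closure D) :=
    hgc.comp_continuousOn (hcont.sub continuousOn_const)
  -- A nonzero shift moves `g ∘ G omb` monotonically, and strictly at an extremum of `G omb`.
  rcases lt_trichotomy lb 0 with hneg | hzero | hpos
  · obtain ⟨x₀, hx₀, hGx₀⟩ := hM.1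
    refine absurd hshift (ne_of_gt ?_)
    refine setIntegral_lt_setIntegral_of_continuousOn_closure hDo hK hc hc_lb
      (fun x _ => hgm (by linarith)) hx₀ ?_
    simp only [hGx₀]
    exact hgsM (mem_Ici.mpr le_rfl) (mem_Ici.mpr (by linarith)) (by linarith)
  · exact hzero
  · obtain ⟨x₀, hx₀, hGx₀⟩ := hm.1
    refine absurd hshift (ne_of_lt ?_)
    refine setIntegral_lt_setIntegral_of_continuousOn_closure hDo hK hc_lb hc
      (fun x _ => hgm (by linarith)) hx₀ ?_
    simp only [hGx₀]
    exact hgsm (mem_Iic.mpr (by linarith)) (mem_Iic.mpr le_rfl) (by linarith)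

/-- Let `D ⊂ ℝ²` be a bounded (smooth) domain, `G` the Green
operator of `-Δ` with zero Dirichlet boundary data, `ω̄ ∈ L^∞(D)` with
`ω̄ = g(Gω̄)` a.e., where `g` is continuous, nondecreasing, strictly increasing on
`(-∞, m]` and on `[M, +∞)` (`m = min_{D̄} Gω̄`, `M = max_{D̄} Gω̄`), and
`g(s) → ±∞` as `s → ±∞`.  If `∫_D g(Gω̄ - λ̄) = ∫_D ω̄` then `λ̄ = 0`. -/
theorem stmt13 (D : Set (EuclideanSpace ℝ (Fin 2)))
    (hDo : IsOpen D) (hDne : D.Nonempty) (hDb : Bornology.IsBounded D)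
    (G : (EuclideanSpace ℝ (Fin 2) → ℝ) → (EuclideanSpace ℝ (Fin 2) → ℝ))
    (omb : EuclideanSpace ℝ (Fin 2) → ℝ)
    (homb : MemLp omb ⊤ (volume.restrict D))
    (hcont : ContinuousOn (G omb) (closure D))
    (m M : ℝ)
    (hm : IsLeast (G omb '' closure D) m)
    (hM : IsGreatest (G omb '' closure D) M)
    (g : ℝ → ℝ) (hgc : Continuous g) (hgm : Monotone g)
    (hgsm : StrictMonoOn g (Set.Iic m)) (hgsM : StrictMonoOn g (Set.Ici M))
    (hgtop : Tendsto g atTop atTop) (hgbot : Tendsto g atBot atBot)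
    (heq : ∀ᵐ x ∂(volume.restrict D), omb x = g (G omb x))
    (lb : ℝ)
    (hlb : ∫ x, g (G omb x - lb) ∂(volume.restrict D)
        = ∫ x, omb x ∂(volume.restrict D)) :
    lb = 0 :=
  stmt13_general D hDo hDb G omb hcont m M hm hM g hgc hgm hgsm hgsM heq lb hlb
end

section
/- Let D ⊂ ℝ² be a bounded smooth domain and G = (−Δ)⁻¹ with zero Dirichlet boundary condition. Suppose g : ℝ → ℝ is strictly decreasing with g(s) → ∓∞ as s → ±∞, and ω̄ ∈ L^∞(D) satisfies the relation Gω̄ = f(ω̄) a.e., where f(s) = inf{τ : g(τ) ≤ s}. Let F(s) = ∫₀ˢ f(τ) dτ. Then for every φ ∈ L^∞(D), φ ≠ 0, with ∫_D F(ω̄ + φ) dx = ∫_D F(ω̄) dx (in particular for φ with ω̄ + φ a rearrangement of ω̄), one has E(ω̄ + φ) − E(ω̄) ≥ ½ ∫_D φ·Gφ dx > 0, where E(ω) = ½∫_D ω·Gω dx. -/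
open MeasureTheory Filter Set Topology

/-- key estimate of Arnol'd's first stability theorem: Let
`D ⊂ ℝ²` be a bounded (smooth) domain and `G = (-Δ)⁻¹` with zero Dirichlet data
(modeled as an additive, symmetric, positive-definite operator on functions
mapping `L^∞` to `L^∞`).  Let `g : ℝ → ℝ` be strictly decreasing with
`g → ∓∞` as `s → ±∞`, `f s = inf {τ | g τ ≤ s}` its generalized inverse,
`F s = ∫₀ˢ f`, and suppose `ω̄ ∈ L^∞(D)` satisfies `Gω̄ = f(ω̄)` a.e.  Then for
every bounded `φ ≠ 0` with `∫ F(ω̄ + φ) = ∫ F(ω̄)` (in particular whenever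
`ω̄ + φ` is a rearrangement of `ω̄`):
`E(ω̄ + φ) - E(ω̄) ≥ ½∫ φ·Gφ > 0`, where `E(ω) = ½∫ ω·Gω`. -/
theorem stmt17 (D : Set (EuclideanSpace ℝ (Fin 2)))
    (hDo : IsOpen D) (hDne : D.Nonempty) (hDb : Bornology.IsBounded D)
    (G : (EuclideanSpace ℝ (Fin 2) → ℝ) → (EuclideanSpace ℝ (Fin 2) → ℝ))
    (hGadd : ∀ f h : EuclideanSpace ℝ (Fin 2) → ℝ, G (f + h) = G f + G h)
    (hGmem : ∀ f : EuclideanSpace ℝ (Fin 2) → ℝ,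
      MemLp f ⊤ (volume.restrict D) → MemLp (G f) ⊤ (volume.restrict D))
    (hGsym : ∀ f h : EuclideanSpace ℝ (Fin 2) → ℝ,
      MemLp f ⊤ (volume.restrict D) → MemLp h ⊤ (volume.restrict D) →
      ∫ x, f x * G h x ∂(volume.restrict D) = ∫ x, h x * G f x ∂(volume.restrict D))
    (hGpos : ∀ f : EuclideanSpace ℝ (Fin 2) → ℝ,
      MemLp f ⊤ (volume.restrict D) → ¬ f =ᵐ[volume.restrict D] 0 →
      0 < ∫ x, f x * G f x ∂(volume.restrict D))
    (g : ℝ → ℝ) (hg : StrictAnti g)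
    (hgtop : Tendsto g atTop atBot) (hgbot : Tendsto g atBot atTop)
    (f : ℝ → ℝ) (hf : ∀ s, f s = sInf {τ : ℝ | g τ ≤ s})
    (F : ℝ → ℝ) (hF : ∀ s, F s = ∫ τ in (0:ℝ)..s, f τ)
    (omb : EuclideanSpace ℝ (Fin 2) → ℝ)
    (homb : MemLp omb ⊤ (volume.restrict D))
    (heq : ∀ᵐ x ∂(volume.restrict D), G omb x = f (omb x)) :
    ∀ φ : EuclideanSpace ℝ (Fin 2) → ℝ,
      MemLp φ ⊤ (volume.restrict D) → ¬ φ =ᵐ[volume.restrict D] 0 →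
      (∫ x, F (omb x + φ x) ∂(volume.restrict D)
        = ∫ x, F (omb x) ∂(volume.restrict D)) →
      ((1 / 2) * ∫ x, φ x * G φ x ∂(volume.restrict D)
          ≤ (1 / 2) * ∫ x, (omb x + φ x) * G (omb + φ) x ∂(volume.restrict D)
            - (1 / 2) * ∫ x, omb x * G omb x ∂(volume.restrict D)) ∧
        0 < (1 / 2) * ∫ x, φ x * G φ x ∂(volume.restrict D) := by
  intro φ hφ hφ0 hFeq
  set μ := volume.restrict D with hμ
  haveI : IsFiniteMeasure μ := ⟨by
    rw [hμ, Measure.restrict_apply_univ]; exact hDb.measure_lt_top⟩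
  -- f is antitone
  have hne : ∀ s : ℝ, {τ : ℝ | g τ ≤ s}.Nonempty := fun s =>
    (hgtop.eventually (eventually_le_atBot s)).exists
  have hbdd : ∀ s : ℝ, BddBelow {τ : ℝ | g τ ≤ s} := by
    intro s
    obtain ⟨T, hT⟩ := eventually_atBot.mp (hgbot.eventually (eventually_ge_atTop (s + 1)))
    refine ⟨T, fun τ hτ => ?_⟩
    by_contra hc
    push_neg at hc
    have := hT τ hc.le
    have : g τ ≤ s := hτ
    linarith [hT τ hc.le]
  have hfanti : Antitone f := by
    intro s s' hss'
    rw [hf s, hf s']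
    exact csInf_le_csInf (hbdd s') (hne s) (fun τ hτ => le_trans hτ hss')
  have hint : ∀ a b : ℝ, IntervalIntegrable f volume a b := fun a b =>
    hfanti.intervalIntegrable
  -- key pointwise estimate F (r+s) ≤ F r + f r * s
  have key : ∀ r s : ℝ, F (r + s) ≤ F r + f r * s := by
    intro r s
    have hsplit : F (r + s) = F r + ∫ τ in r..(r + s), f τ := by
      rw [hF, hF, ← intervalIntegral.integral_add_adjacent_intervals (hint 0 r) (hint r (r + s))]
    rw [hsplit]
    rcases le_total 0 s with hs | hs
    · have : (∫ τ in r..(r + s), f τ) ≤ ∫ τ in r..(r + s), f r := by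
        refine intervalIntegral.integral_mono_on (by linarith) (hint r (r + s))
          intervalIntegrable_const (fun x hx => hfanti hx.1)
      rw [intervalIntegral.integral_const, smul_eq_mul] at this
      nlinarith
    · have : (∫ τ in (r + s)..r, f r) ≤ ∫ τ in (r + s)..r, f τ := by
        refine intervalIntegral.integral_mono_on (by linarith) intervalIntegrable_const
          (hint (r + s) r) (fun x hx => hfanti hx.2)
      rw [intervalIntegral.integral_const, smul_eq_mul,
        intervalIntegral.integral_symm r (r + s)] at *
      nlinarith
  -- F is continuous
  have hFcont : Continuous F := by
    have h1 : F = fun s => ∫ τ in (0:ℝ)..s, f τ := funext hF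
    rw [h1]
    exact intervalIntegral.continuous_primitive hint 0
  -- a.e. bounds from L^∞
  have haebd : ∀ ψ : EuclideanSpace ℝ (Fin 2) → ℝ, MemLp ψ ⊤ μ →
      ∃ C : ℝ, ∀ᵐ x ∂μ, |ψ x| ≤ C := by
    intro ψ hψ
    refine ⟨(eLpNormEssSup ψ μ).toReal, ?_⟩
    have h2 : eLpNormEssSup ψ μ ≠ ⊤ := by
      have := hψ.2
      rw [eLpNorm_exponent_top] at this
      exact this.ne
    filter_upwards [ae_le_eLpNormEssSup (f := ψ) (μ := μ)] with x hx
    have := ENNReal.toReal_mono h2 hx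
    simpa [Real.norm_eq_abs] using this
  have hcomp : ∀ ψ : EuclideanSpace ℝ (Fin 2) → ℝ, MemLp ψ ⊤ μ →
      Integrable (fun x => F (ψ x)) μ := by
    intro ψ hψ
    obtain ⟨C, hC⟩ := haebd ψ hψ
    obtain ⟨B, hB⟩ := (isCompact_Icc (a := -C) (b := C)).exists_bound_of_continuousOn
      hFcont.continuousOn
    refine (memLp_top_of_bound (hFcont.comp_aestronglyMeasurable hψ.1) B ?_).integrable le_top
    filter_upwards [hC] with x hx
    exact hB (ψ x) (mem_Icc.mpr ⟨neg_le_of_abs_le hx, le_of_abs_le hx⟩)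
  have hmul : ∀ ψ χ : EuclideanSpace ℝ (Fin 2) → ℝ, MemLp ψ ⊤ μ → MemLp χ ⊤ μ →
      Integrable (fun x => ψ x * χ x) μ := by
    intro ψ χ hψ hχ
    obtain ⟨C, hC⟩ := haebd ψ hψ
    exact (hχ.integrable le_top).bdd_mul hψ.1
      (hC.mono fun x hx => by simpa [Real.norm_eq_abs] using hx)
  -- crucial nonnegativity
  have hpt : ∀ᵐ x ∂μ, F (omb x + φ x) ≤ F (omb x) + φ x * G omb x := by
    filter_upwards [heq] with x hx
    rw [hx, mul_comm]
    exact key (omb x) (φ x)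
  have I1 : Integrable (fun x => F (omb x + φ x)) μ := hcomp _ (homb.add hφ)
  have I2 : Integrable (fun x => F (omb x)) μ := hcomp _ homb
  have I3 : Integrable (fun x => φ x * G omb x) μ := hmul _ _ hφ (hGmem omb homb)
  have h1 : ∫ x, F (omb x + φ x) ∂μ ≤ ∫ x, (F (omb x) + φ x * G omb x) ∂μ :=
    integral_mono_ae I1 (I2.add I3) hpt
  rw [integral_add I2 I3, hFeq] at h1
  have hcross : 0 ≤ ∫ x, φ x * G omb x ∂μ := by linarith
  -- expansion of the quadratic form
  have Iaa : Integrable (fun x => omb x * G omb x) μ := hmul _ _ homb (hGmem omb homb)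
  have Iab : Integrable (fun x => omb x * G φ x) μ := hmul _ _ homb (hGmem φ hφ)
  have Ibb : Integrable (fun x => φ x * G φ x) μ := hmul _ _ hφ (hGmem φ hφ)
  have hexp : ∫ x, (omb x + φ x) * G (omb + φ) x ∂μ
      = ∫ x, omb x * G omb x ∂μ + ∫ x, omb x * G φ x ∂μ
        + (∫ x, φ x * G omb x ∂μ + ∫ x, φ x * G φ x ∂μ) := by
    rw [hGadd omb φ]
    have e : (fun x => (omb x + φ x) * (G omb + G φ) x)
        = fun x => (omb x * G omb x + omb x * G φ x) + (φ x * G omb x + φ x * G φ x) := by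
      funext x; simp only [Pi.add_apply]; ring
    calc ∫ x, (omb x + φ x) * (G omb + G φ) x ∂μ
        = ∫ x, ((omb x * G omb x + omb x * G φ x) + (φ x * G omb x + φ x * G φ x)) ∂μ := by
          rw [e]
      _ = (∫ x, (omb x * G omb x + omb x * G φ x) ∂μ)
          + ∫ x, (φ x * G omb x + φ x * G φ x) ∂μ :=
          integral_add (Iaa.add Iab) (I3.add Ibb)
      _ = _ := congrArg₂ (· + ·) (integral_add Iaa Iab) (integral_add I3 Ibb)
  have hsym : ∫ x, omb x * G φ x ∂μ = ∫ x, φ x * G omb x ∂μ := hGsym omb φ homb hφ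
  have hpos : 0 < ∫ x, φ x * G φ x ∂μ := hGpos φ hφ hφ0
  constructor
  · rw [hexp, hsym]; linarith
  · linarith
end
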